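/- arXiv:2410.04544 — 7 statements merged into one kernel-verified Lean document; each statement's English description precedes it below -/
import Mathlib

section
/- Let P be a finite set of points in the plane in general position (no three collinear), and let (t, u, v) be three consecutive vertices in clockwise order on the convex hull of P. Then every point of P that becomes a vertex of the convex hull of P \ {u} but was not a vertex of the convex hull of P lies inside the triangle with vertices t, u, v. -/
open Set MeasureTheory

noncomputable section

abbrev Pt := EuclideanSpace ℝ (Fin 2)

/-- General position: no three distinct points of `S` are collinear. -/
def GenPos (S : Set Pt) : Prop :=
  ∀ p q r : Pt, p ∈ S → q ∈ S → r ∈ S → p ≠ q → q ≠ r → p ≠ r →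
    ¬ Collinear ℝ ({p, q, r} : Set Pt)

/-- `p` is a vertex (extreme point) of the convex hull of `S`. -/
def IsHullVertex (S : Set Pt) (p : Pt) : Prop :=
  p ∈ S ∧ p ∉ convexHull ℝ (S \ {p})

/-- `p` is active for the hull vertex `u` of `S`: it is a vertex of
`CH(S \ {u})` but not a vertex of `CH(S)`. -/
def ActiveFor (S : Set Pt) (u p : Pt) : Prop :=
  IsHullVertex (S \ {u}) p ∧ ¬ IsHullVertex S p

/-- `a` and `b` are adjacent (consecutive) vertices on the convex hull of `S`:
both are hull vertices and the segment between them lies on the hull boundary. -/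
def AdjacentVertices (S : Set Pt) (a b : Pt) : Prop :=
  a ≠ b ∧ IsHullVertex S a ∧ IsHullVertex S b ∧
    segment ℝ a b ⊆ frontier (convexHull ℝ S)

/-- 2D cross product. -/
def cross2 (a b : Pt) : ℝ := a 0 * b 1 - a 1 * b 0

/-- `(t, u, v)` are consecutive vertices of the hull of `S`, in clockwise order
(the turn `t → u → v` is a right turn). -/
def ConsecutiveCW (S : Set Pt) (t u v : Pt) : Prop :=
  AdjacentVertices S t u ∧ AdjacentVertices S u v ∧ t ≠ v ∧
    cross2 (u - t) (v - u) ≤ 0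

/-- Area of the convex hull of `S`. -/
def hullArea (S : Set Pt) : ENNReal := volume (convexHull ℝ S)

/-!
The hull edges `tu` and `uv` lie on supporting lines of `CH(P)`, so every point of `CH(P)` lies
on the same side of them as the triangle `tuv`. For the third side `tv`: as `p` is not a vertex
of `CH(P)`, it lies on a segment `[u, y]` with `y ∈ CH(Q)`, `Q = P \ {u, p}`. If `p` were strictly
beyond the line `tv`, the point `w` where `[u, p]` crosses that line would lie in `CH(P)` and
between the two supporting lines, hence on `[t, v] ⊆ CH(Q)`; then `p ∈ [w, y] ⊆ CH(Q)`,
contradicting that `p` is a vertex of `CH(P \ {u})`.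
-/

theorem exists_dual_le_of_mem_frontier {E : Type*} [NormedAddCommGroup E] [NormedSpace ℝ E]
    {K : Set E} (hK : Convex ℝ K) {m x₀ : E} (hm : m ∈ frontier K) (hx₀ : x₀ ∈ interior K) :
    ∃ g : StrongDual ℝ E, (∀ x ∈ K, g x ≤ g m) ∧ g x₀ < g m := by
  obtain ⟨g, hg⟩ := geometric_hahn_banach_open_point hK.interior isOpen_interior hm.2
  refine ⟨g, fun x hx => ?_, hg x₀ hx₀⟩
  have hx' : x ∈ closure (interior K) := by
    rw [hK.closure_interior_eq_closure_of_nonempty_interior ⟨x₀, hx₀⟩]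
    exact subset_closure hx
  exact closure_minimal (fun y hy => (hg y hy).le) (isClosed_le g.continuous continuous_const) hx'

theorem exists_wbtw_apply_eq_zero {E : Type*} [AddCommGroup E] [Module ℝ E] (f : E →ᵃ[ℝ] ℝ)
    {x y : E} (hx : f x < 0) (hy : 0 ≤ f y) : ∃ w, Wbtw ℝ x w y ∧ f w = 0 := by
  have hxy : f x - f y < 0 := by linarith
  refine ⟨AffineMap.lineMap x y (f x / (f x - f y)), ⟨_, ⟨?_, ?_⟩, rfl⟩, ?_⟩
  · exact div_nonneg_of_nonpos hx.le hxy.le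
  · exact (div_le_one_of_neg hxy).2 (by linarith)
  · rw [AffineMap.apply_lineMap, AffineMap.lineMap_apply_ring']
    field_simp [hxy.ne]
    ring

theorem mem_convexHull_of_mem_convexHull_insert {E : Type*} [AddCommGroup E] [Module ℝ E]
    (f : E →ᵃ[ℝ] ℝ) {Q : Set E} {u p : E} (hu : f u < 0) (hp : 0 ≤ f p)
    (hpQ : p ∈ convexHull ℝ (insert u Q))
    (hzero : ∀ w ∈ convexHull ℝ (insert u Q), f w = 0 → w ∈ convexHull ℝ Q) :
    p ∈ convexHull ℝ Q := by
  rcases Q.eq_empty_or_nonempty with rfl | hQ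
  · rw [insert_empty_eq, convexHull_singleton, mem_singleton_iff] at hpQ
    subst hpQ
    linarith
  -- `w` is where `[u, p]` meets the zero set of `f`; then `p ∈ [w, y]` for the `y` below
  obtain ⟨w, huwp, hw⟩ := exists_wbtw_apply_eq_zero f hu hp
  have hwQ : w ∈ convexHull ℝ (insert u Q) :=
    (convex_convexHull ℝ _).segment_subset (subset_convexHull ℝ _ (mem_insert u Q)) hpQ
      huwp.mem_segment
  rw [convexHull_insert hQ, convexJoin_singleton_left, mem_iUnion₂] at hpQ
  obtain ⟨y, hy, hpy⟩ := hpQ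
  exact (convex_convexHull ℝ Q).segment_subset (hzero w hwQ hw) hy
    ((mem_segment_iff_wbtw.1 hpy).trans_left_right huwp).mem_segment

theorem interior_convexHull_nonempty_of_not_collinear {V : Type*} [NormedAddCommGroup V]
    [NormedSpace ℝ V] [FiniteDimensional ℝ V] (hV : Module.finrank ℝ V = 2) {S : Set V}
    {a b c : V} (hS : {a, b, c} ⊆ S) (h : ¬ Collinear ℝ ({a, b, c} : Set V)) :
    (interior (convexHull ℝ S)).Nonempty := by
  rw [interior_convexHull_nonempty_iff_affineSpan_eq_top]
  have hspan : affineSpan ℝ (range ![a, b, c]) = ⊤ :=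
    (affineIndependent_iff_not_collinear_set.2 h).affineSpan_eq_top_iff_card_eq_finrank_add_one.2
      (by simp [hV])
  refine top_unique (hspan ▸ affineSpan_mono ℝ ?_)
  rwa [Matrix.range_cons, Matrix.range_cons_cons_empty, singleton_union]

/-- Twice the signed area of the triangle `a b x`, positive when `a, b, x` turn counterclockwise. -/
def orient (a b : Pt) : Pt →ᵃ[ℝ] ℝ where
  toFun x := cross2 (b - a) (x - a)
  linear :=
    { toFun := cross2 (b - a)
      map_add' x y := by simp only [cross2, PiLp.add_apply]; ring
      map_smul' c x := by simp only [cross2, PiLp.smul_apply, smul_eq_mul, RingHom.id_apply]; ring }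
  map_vadd' x y := by simp only [cross2, vadd_eq_add, PiLp.add_apply, PiLp.sub_apply,
    LinearMap.coe_mk, AddHom.coe_mk]; ring

theorem orient_apply (a b x : Pt) :
    orient a b x = (b 0 - a 0) * (x 1 - a 1) - (b 1 - a 1) * (x 0 - a 0) := by
  simp [orient, cross2]

theorem orient_rotate (a b c : Pt) : orient b c a = orient a b c := by
  simp only [orient_apply]; ring

theorem cross2_sub_sub_eq_orient (t u v : Pt) : cross2 (u - t) (v - u) = orient t u v := by
  simp only [orient_apply, cross2, PiLp.sub_apply]; ring

theorem orient_add_orient_add_orient (t u v x : Pt) :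
    orient u v x + orient v t x + orient t u x = orient t u v := by
  simp only [orient_apply]; ring

theorem orient_smul_add_orient_smul_add_orient_smul (t u v x : Pt) :
    orient u v x • t + orient v t x • u + orient t u x • v = orient t u v • x := by
  ext i
  fin_cases i <;> simp [orient_apply] <;> ring

theorem exists_eq_smul_of_cross2_eq_zero {w z : Pt} (hw : w ≠ 0) (h : cross2 w z = 0) :
    ∃ μ : ℝ, z = μ • w := by
  unfold cross2 at h
  by_cases h0 : w 0 = 0
  · have h1 : w 1 ≠ 0 := fun h1 => hw (by ext i; fin_cases i <;> simp [h0, h1])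
    refine ⟨z 1 / w 1, ?_⟩
    ext i; fin_cases i
    · simp only [h0, zero_mul, zero_sub, neg_eq_zero, mul_eq_zero, h1, false_or] at h
      simp [h0, h]
    · simp [h1]
  · refine ⟨z 0 / w 0, ?_⟩
    ext i; fin_cases i
    · simp [h0]
    · simp only [Fin.mk_one, Fin.isValue, PiLp.smul_apply, smul_eq_mul]
      field_simp
      linear_combination h

theorem collinear_of_orient_eq_zero {a b x : Pt} (hab : a ≠ b) (h : orient a b x = 0) :
    Collinear ℝ ({a, b, x} : Set Pt) := by
  obtain ⟨μ, hμ⟩ := exists_eq_smul_of_cross2_eq_zero (sub_ne_zero.2 hab.symm) h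
  rw [collinear_iff_of_mem (mem_insert a _)]
  refine ⟨b - a, ?_⟩
  rintro y (rfl | rfl | rfl)
  · exact ⟨0, by simp⟩
  · exact ⟨1, by simp⟩
  · exact ⟨μ, by rw [vadd_eq_add, ← hμ, sub_add_cancel]⟩

theorem dual_apply_eq_coords (g : Pt →L[ℝ] ℝ) (x : Pt) :
    g x = x 0 * g (EuclideanSpace.single 0 1) + x 1 * g (EuclideanSpace.single 1 1) := by
  conv_lhs => rw [← (EuclideanSpace.basisFun (Fin 2) ℝ).toBasis.sum_repr x]
  simp [Fin.sum_univ_two]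

theorem orient_mul_eq_mul_orient (g : Pt →L[ℝ] ℝ) {a b : Pt} {c : ℝ} (ha : g a = c)
    (hb : g b = c) (x y : Pt) :
    (g x - c) * orient a b y = (g y - c) * orient a b x := by
  rw [dual_apply_eq_coords] at ha hb ⊢
  rw [dual_apply_eq_coords g y]
  simp only [orient_apply]
  -- the coefficients are `orient b y x` and `orient y a x`
  linear_combination ((y 0 - b 0) * (x 1 - b 1) - (y 1 - b 1) * (x 0 - b 0)) * ha
    + ((a 0 - y 0) * (x 1 - y 1) - (a 1 - y 1) * (x 0 - y 0)) * hb

/- A functional supporting `K` at the midpoint of `[a, b]` takes the same value `c` at `a` and `b`,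
so `g - c` is proportional to `orient a b`, which therefore has constant sign on `K`. -/
theorem orient_mul_orient_nonneg_of_segment_subset_frontier {K : Set Pt} (hK : Convex ℝ K)
    (hint : (interior K).Nonempty) {a b : Pt} (ha : a ∈ K) (hb : b ∈ K)
    (hab : segment ℝ a b ⊆ frontier K) {x y : Pt} (hx : x ∈ K) (hy : y ∈ K) :
    0 ≤ orient a b x * orient a b y := by
  obtain ⟨x₀, hx₀⟩ := hint
  obtain ⟨g, hgK, hg₀⟩ := exists_dual_le_of_mem_frontier hK (hab (midpoint_mem_segment a b)) hx₀
  set c := g (midpoint ℝ a b)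
  have hmid : g a + g b = 2 * c := by
    simp only [c, midpoint_eq_smul_add, map_smul, map_add, smul_eq_mul, invOf_eq_inv]; ring
  have hga : g a = c := by linarith [hgK a ha, hgK b hb]
  have hgb : g b = c := by linarith [hgK a ha, hgK b hb]
  have hkey := orient_mul_eq_mul_orient g hga hgb x₀
  have hsq : orient a b x * orient a b y * (g x₀ - c) ^ 2
      = (g x - c) * (g y - c) * orient a b x₀ ^ 2 := by
    linear_combination (orient a b y * (g x₀ - c)) * hkey x
      + ((g x - c) * orient a b x₀) * hkey y
  refine (mul_nonneg_iff_of_pos_right (sq_pos_of_neg (sub_neg.2 hg₀))).1 ?_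
  rw [hsq]
  exact mul_nonneg (mul_nonneg_of_nonpos_of_nonpos (by linarith [hgK x hx])
    (by linarith [hgK y hy])) (sq_nonneg _)

theorem orient_nonpos_of_segment_subset_frontier {K : Set Pt} (hK : Convex ℝ K)
    (hint : (interior K).Nonempty) {a b c : Pt} (ha : a ∈ K) (hb : b ∈ K) (hc : c ∈ K)
    (hab : segment ℝ a b ⊆ frontier K) (hcneg : orient a b c < 0) {x : Pt} (hx : x ∈ K) :
    orient a b x ≤ 0 :=
  nonpos_of_mul_nonneg_left
    (orient_mul_orient_nonneg_of_segment_subset_frontier hK hint ha hb hab hx hc) hcneg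

theorem mem_segment_of_orient_nonpos {t u v x : Pt} (hD : orient t u v < 0)
    (hu : orient u v x ≤ 0) (hv : orient v t x = 0) (ht : orient t u x ≤ 0) :
    x ∈ segment ℝ t v := by
  have hD' : (orient t u v)⁻¹ ≤ 0 := inv_nonpos.2 hD.le
  refine ⟨(orient t u v)⁻¹ * orient u v x, (orient t u v)⁻¹ * orient t u x,
    mul_nonneg_of_nonpos_of_nonpos hD' hu, mul_nonneg_of_nonpos_of_nonpos hD' ht, ?_, ?_⟩
  · have hsum := orient_add_orient_add_orient t u v x
    rw [hv, add_zero] at hsum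
    rw [← mul_add, hsum, inv_mul_cancel₀ hD.ne]
  · have h := orient_smul_add_orient_smul_add_orient_smul t u v x
    rw [hv, zero_smul, add_zero] at h
    rw [mul_smul, mul_smul, ← smul_add, h, smul_smul, inv_mul_cancel₀ hD.ne, one_smul]

theorem mem_convexHull_triple_of_orient_nonpos {t u v x : Pt} (hD : orient t u v < 0)
    (hu : orient u v x ≤ 0) (hv : orient v t x ≤ 0) (ht : orient t u x ≤ 0) :
    x ∈ convexHull ℝ ({t, u, v} : Set Pt) := by
  have hD' : (orient t u v)⁻¹ ≤ 0 := inv_nonpos.2 hD.le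
  have h := (convex_convexHull ℝ ({t, u, v} : Set Pt)).sum_mem (t := Finset.univ)
    (w := fun i => (orient t u v)⁻¹ * ![orient u v x, orient v t x, orient t u x] i)
    (z := ![t, u, v]) ?_ ?_ ?_
  · convert h using 1
    simp only [Fin.sum_univ_three, Matrix.cons_val]
    rw [mul_smul, mul_smul, mul_smul, ← smul_add, ← smul_add,
      orient_smul_add_orient_smul_add_orient_smul, smul_smul, inv_mul_cancel₀ hD.ne, one_smul]
  · intro i _
    fin_cases i <;> simp [mul_nonneg_of_nonpos_of_nonpos, hD', hu, hv, ht]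
  · simp only [Fin.sum_univ_three, Matrix.cons_val, ← mul_add, orient_add_orient_add_orient,
      inv_mul_cancel₀ hD.ne]
  · intro i _
    fin_cases i <;> exact subset_convexHull ℝ _ (by simp)

theorem active_point_in_triangle_general (P : Finset Pt) (t u v : Pt)
    (hgp : GenPos (↑P : Set Pt))
    (hc : ConsecutiveCW (↑P : Set Pt) t u v) (p : Pt)
    (hnew : IsHullVertex ((↑P : Set Pt) \ {u}) p)
    (hold : ¬ IsHullVertex (↑P : Set Pt) p) :
    p ∈ convexHull ℝ ({t, u, v} : Set Pt) := by
  obtain ⟨⟨htu, ht, ⟨huP, -⟩, hedge_tu⟩, ⟨huv, -, hv, hedge_uv⟩, htv, hcw⟩ := hc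
  obtain ⟨⟨hpP, hpu⟩, hpQ⟩ := hnew
  set K := convexHull ℝ (↑P : Set Pt)
  have hmem {x : Pt} (hx : x ∈ (↑P : Set Pt)) : x ∈ K := subset_convexHull ℝ _ hx
  have hncol := hgp t u v ht.1 huP hv.1 htu huv htv
  have hD : orient t u v < 0 := (cross2_sub_sub_eq_orient t u v ▸ hcw).lt_of_ne
    fun h => hncol (collinear_of_orient_eq_zero htu h)
  have hint : (interior K).Nonempty := interior_convexHull_nonempty_of_not_collinear
    finrank_euclideanSpace_fin (by simp [insert_subset_iff, ht.1, huP, hv.1]) hncol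
  have hside_tu {x : Pt} : x ∈ K → orient t u x ≤ 0 :=
    orient_nonpos_of_segment_subset_frontier (convex_convexHull ℝ _) hint (hmem ht.1) (hmem huP)
      (hmem hv.1) hedge_tu hD
  have hside_uv {x : Pt} : x ∈ K → orient u v x ≤ 0 :=
    orient_nonpos_of_segment_subset_frontier (convex_convexHull ℝ _) hint (hmem huP) (hmem hv.1)
      (hmem ht.1) hedge_uv (orient_rotate t u v ▸ hD)
  have hpK : p ∈ convexHull ℝ ((↑P : Set Pt) \ {p}) := not_not.1 fun h => hold ⟨hpP, h⟩
  have hpK' : p ∈ K := convexHull_mono sdiff_subset hpK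
  have hside_vt : orient v t p ≤ 0 := by
    by_contra! hpos
    set Q := ((↑P : Set Pt) \ {u}) \ {p}
    have hsplit : (↑P : Set Pt) \ {p} = insert u Q := by
      ext x; by_cases hx : x = u <;> simp_all [Q, Ne.symm hpu]
    have hQ {x : Pt} (hx : IsHullVertex (↑P : Set Pt) x) (hxu : x ≠ u) : x ∈ Q :=
      ⟨⟨hx.1, hxu⟩, fun hxp => hold (hxp ▸ hx)⟩
    rw [hsplit] at hpK
    refine hpQ (mem_convexHull_of_mem_convexHull_insert (orient v t) ?_ hpos.le hpK ?_)
    · rwa [orient_rotate, orient_rotate]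
    · intro w hw hw0
      have hwK : w ∈ K := convexHull_mono (hsplit ▸ sdiff_subset) hw
      exact segment_subset_convexHull (hQ ht htu) (hQ hv huv.symm)
        (mem_segment_of_orient_nonpos hD (hside_uv hwK) hw0 (hside_tu hwK))
  exact mem_convexHull_triple_of_orient_nonpos hD (hside_uv hpK') hside_vt (hside_tu hpK')

theorem active_point_in_triangle (P : Finset Pt) (t u v : Pt)
    (hgp : GenPos (↑P : Set Pt))
    (hc : ConsecutiveCW (↑P : Set Pt) t u v) (p : Pt) (hp : p ∈ P)
    (hnew : IsHullVertex ((↑P : Set Pt) \ {u}) p)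
    (hold : ¬ IsHullVertex (↑P : Set Pt) p) :
    p ∈ convexHull ℝ ({t, u, v} : Set Pt) :=
  active_point_in_triangle_general P t u v hgp hc p hnew hold
end
end

section
/- Let P be a finite set of points in the plane in general position, and let u be a vertex of the convex hull of P with hull-neighbors t and v. If p is active for u (i.e., p is a vertex of CH(P \ {u}) but not of CH(P)), then p lies strictly inside the triangle t u v. -/
open Set MeasureTheory

noncomputable section

/-!
In barycentric coordinates with respect to the triangle `t u v`, the supporting lines of the hull
edges `t u` and `u v` meet `P` only in their endpoints, so the coordinates of `p` at `v` and at `t`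
are positive. Since `p` is not a hull vertex but is one once `u` is removed, `p` lies in the hull
of `u` and `Q = P \ {u, p}` but not in the hull of `Q`. The hull of `Q` contains the edge `t v`
and lies on the nonnegative side of the two other edges, so a point of the segment from `u` to
`Q` with nonpositive coordinate at `u` would already lie in the hull of `Q`.
-/

section AffineSpace

variable {k V P : Type*} [Field k] [AddCommGroup V] [Module k V] [AddTorsor V P]

theorem AffineBasis.coord_eq_div {ι : Type*} (b : AffineBasis ι k P) (g : P →ᵃ[k] k) {i : ι}
    (hg : ∀ j ≠ i, g (b j) = 0) (hgi : g (b i) ≠ 0) (x : P) :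
    b.coord i x = g x / g (b i) := by
  suffices b.coord i = (g (b i))⁻¹ • g by
    rw [this, AffineMap.coe_smul, Pi.smul_apply, smul_eq_mul, inv_mul_eq_div]
  refine AffineMap.ext_on b.tot ?_
  rintro - ⟨j, rfl⟩
  rcases eq_or_ne j i with rfl | hji
  · simp [b.coord_apply_eq, hgi]
  · simp [b.coord_apply_ne hji.symm, hg j hji]

def triangleBasis [FiniteDimensional k V] (hV : Module.finrank k V = 2) {t u v : P}
    (h : ¬ Collinear k ({t, u, v} : Set P)) : AffineBasis (Fin 3) k P :=
  ⟨![t, u, v], affineIndependent_iff_not_collinear_set.2 h, by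
    rw [(affineIndependent_iff_not_collinear_set.2 h).affineSpan_eq_top_iff_card_eq_finrank_add_one,
      hV, Fintype.card_fin]⟩

@[simp]
theorem coe_triangleBasis [FiniteDimensional k V] (hV : Module.finrank k V = 2) {t u v : P}
    (h : ¬ Collinear k ({t, u, v} : Set P)) : ⇑(triangleBasis hV h) = ![t, u, v] :=
  rfl

theorem range_triangleBasis [FiniteDimensional k V] (hV : Module.finrank k V = 2) {t u v : P}
    (h : ¬ Collinear k ({t, u, v} : Set P)) : range (triangleBasis hV h) = {t, u, v} := by
  rw [coe_triangleBasis, Matrix.range_cons, Matrix.range_cons, Matrix.range_cons,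
    Matrix.range_empty, union_empty, singleton_union, singleton_union]

variable [LinearOrder k] [IsStrictOrderedRing k]

theorem exists_wbtw_apply_eq_zero_s1 (g : P →ᵃ[k] k) {x y : P} (hx : 0 < g x) (hy : g y ≤ 0) :
    ∃ r, Wbtw k x r y ∧ g r = 0 := by
  have hxy : 0 < g x - g y := by linarith
  refine ⟨AffineMap.lineMap x y (g x / (g x - g y)),
    ⟨_, ⟨div_nonneg hx.le hxy.le, (div_le_one hxy).2 (by linarith)⟩, rfl⟩, ?_⟩
  rw [AffineMap.apply_lineMap, AffineMap.lineMap_apply_ring']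
  field_simp
  ring

end AffineSpace

section VectorSpace

variable {k E ι : Type*} [Field k] [LinearOrder k] [IsStrictOrderedRing k]
  [AddCommGroup E] [Module k E] [Fintype ι]

theorem AffineBasis.mem_convexHull_of_coord_eq_zero (b : AffineBasis ι k E) {S : Set E} {i : ι}
    (hbS : ∀ j ≠ i, b j ∈ S) {y : E} (hy : ∀ j, 0 ≤ b.coord j y) (hyi : b.coord i y = 0) :
    y ∈ convexHull k S := by
  classical
  have hsum : ∑ j ∈ Finset.univ.erase i, b.coord j y = 1 := by
    rw [Finset.sum_erase _ (f := fun j => b.coord j y) hyi, b.sum_coord_apply_eq_one]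
  have hcomb : ∑ j ∈ Finset.univ.erase i, b.coord j y • b j = y := by
    rw [Finset.sum_erase _ (f := fun j => b.coord j y • b j) (by simp only [hyi, zero_smul]),
      b.linear_combination_coord_eq_self]
  rw [← hcomb]
  exact (convex_convexHull k S).sum_mem (fun j _ => hy j) hsum
    (fun j hj => subset_convexHull k S (hbS j (Finset.ne_of_mem_erase hj)))

/-- Otherwise the segment from `b i` to `x` crosses the face opposite `b i` at a point `r` of
`convexHull S`, and `x` lies between `r` and a point of `convexHull S`. -/
theorem AffineBasis.coord_pos_of_mem_convexHull_insert (b : AffineBasis ι k E) {S : Set E}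
    {i : ι} (hbS : ∀ j ≠ i, b j ∈ S) (hS : ∀ y ∈ S, ∀ j ≠ i, 0 ≤ b.coord j y) {x : E}
    (hx : x ∈ convexHull k (insert (b i) S)) (hxS : x ∉ convexHull k S) :
    0 < b.coord i x := by
  rcases S.eq_empty_or_nonempty with rfl | hne
  · rw [insert_empty_eq, convexHull_singleton, mem_singleton_iff] at hx
    simp [hx, b.coord_apply_eq]
  rw [convexHull_insert hne] at hx
  obtain ⟨-, rfl, q, hq, hxq⟩ := mem_convexJoin.1 hx
  have coord_nonneg : ∀ j ≠ i, ∀ y ∈ segment k (b i) q, 0 ≤ b.coord j y := by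
    intro j hj
    have hH : Convex k {y | 0 ≤ b.coord j y} := (convex_Ici 0).affine_preimage (b.coord j)
    refine hH.segment_subset (b.coord_apply_ne hj).ge ?_
    exact convexHull_min (fun y hy => hS y hy j hj) hH hq
  by_contra! hxi
  obtain ⟨r, hr, hri⟩ := exists_wbtw_apply_eq_zero_s1 (b.coord i)
    (by rw [b.coord_apply_eq]; exact one_pos) hxi
  have hxq := mem_segment_iff_wbtw.1 hxq
  have hrq : r ∈ segment k (b i) q := mem_segment_iff_wbtw.2 (hxq.trans_left hr)
  have hrS : r ∈ convexHull k S := by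
    refine b.mem_convexHull_of_coord_eq_zero hbS (fun j => ?_) hri
    rcases eq_or_ne j i with rfl | hj
    exacts [hri.ge, coord_nonneg j hj r hrq]
  exact hxS <| (convex_convexHull k S).segment_subset hrS hq <|
    mem_segment_iff_wbtw.2 (hxq.trans_left_right hr)

end VectorSpace

theorem collinear_of_forall_apply_eq {k E : Type*} [Field k] [AddCommGroup E] [Module k E]
    [FiniteDimensional k E] (hE : Module.finrank k E = 2) {f : Module.Dual k E} (hf : f ≠ 0)
    {s : Set E} {c : k} (hs : ∀ x ∈ s, f x = c) : Collinear k s := by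
  rw [collinear_iff_finrank_le_one]
  have hker : vectorSpan k s ≤ LinearMap.ker f := by
    refine Submodule.span_le.2 ?_
    rintro - ⟨x, hx, y, hy, rfl⟩
    simp [hs x hx, hs y hy]
  have := f.finrank_ker_add_one_of_ne_zero hf
  have := Submodule.finrank_mono hker
  omega

namespace AdjacentVertices

variable {S : Set Pt} {a c : Pt}

/-- `g` is a supporting line separating the midpoint of the edge from the interior of the hull;
by general position it meets `S` only in `a` and `c`. -/
theorem exists_affineMap_pos (h : AdjacentVertices S a c) (hgp : GenPos S)
    (hspan : affineSpan ℝ S = ⊤) :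
    ∃ g : Pt →ᵃ[ℝ] ℝ, g a = 0 ∧ g c = 0 ∧ ∀ x ∈ S, x ≠ a → x ≠ c → 0 < g x := by
  obtain ⟨hac, ⟨haS, -⟩, ⟨hcS, -⟩, hseg⟩ := h
  have hm : midpoint ℝ a c ∉ interior (convexHull ℝ S) := (hseg (midpoint_mem_segment a c)).2
  obtain ⟨f, d, hf, hfS, hdm⟩ := geometric_hahn_banach_of_nonempty_interior
    (convex_convexHull ℝ S) (convex_singleton _) (disjoint_singleton_right.2 hm)
    (interior_convexHull_nonempty_iff_affineSpan_eq_top.2 hspan) (singleton_nonempty _)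
  have hfa := hfS a (subset_convexHull ℝ S haS)
  have hfc := hfS c (subset_convexHull ℝ S hcS)
  have hd : d ≤ (f a + f c) / 2 := by
    have := hdm _ rfl
    rw [midpoint_eq_smul_add, map_smul, map_add, smul_eq_mul, invOf_eq_inv] at this
    linarith
  refine ⟨AffineMap.const ℝ Pt d - (f : Pt →ₗ[ℝ] ℝ).toAffineMap, ?_⟩
  simp only [AffineMap.coe_sub, Pi.sub_apply, AffineMap.const_apply, LinearMap.coe_toAffineMap,
    ContinuousLinearMap.coe_coe, sub_eq_zero, sub_pos]
  refine ⟨by linarith, by linarith, fun x hx hxa hxc => ?_⟩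
  refine (hfS x (subset_convexHull ℝ S hx)).lt_of_ne fun hfx => ?_
  refine hgp a c x haS hcS hx hac (Ne.symm hxc) (Ne.symm hxa) ?_
  refine collinear_of_forall_apply_eq finrank_euclideanSpace_fin
    (fun h0 => hf (ContinuousLinearMap.coe_injective h0)) (c := d) ?_
  rintro y (rfl | rfl | rfl) <;> simp only [ContinuousLinearMap.coe_coe] <;> linarith

theorem coord_pos {ι : Type*} (h : AdjacentVertices S a c) (hgp : GenPos S)
    (hspan : affineSpan ℝ S = ⊤) (B : AffineBasis ι ℝ Pt) {i : ι}
    (hB : ∀ j ≠ i, B j = a ∨ B j = c) (hBi : B i ∈ S) (hBa : B i ≠ a) (hBc : B i ≠ c)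
    {x : Pt} (hx : x ∈ S) : 0 ≤ B.coord i x ∧ (x ≠ a → x ≠ c → 0 < B.coord i x) := by
  obtain ⟨g, hga, hgc, hg⟩ := h.exists_affineMap_pos hgp hspan
  have hgi := hg _ hBi hBa hBc
  rw [B.coord_eq_div g (fun j hj => by rcases hB j hj with h | h <;> rwa [h]) hgi.ne']
  refine ⟨div_nonneg ?_ hgi.le, fun hxa hxc => div_pos (hg x hx hxa hxc) hgi⟩
  rcases eq_or_ne x a with rfl | hxa
  · exact hga.ge
  rcases eq_or_ne x c with rfl | hxc
  · exact hgc.ge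
  exact (hg x hx hxa hxc).le

end AdjacentVertices

theorem ActiveFor.mem_convexHull_insert {S : Set Pt} {u p : Pt} (ha : ActiveFor S u p) :
    p ∈ convexHull ℝ (insert u ((S \ {u}) \ {p})) := by
  refine convexHull_mono ?_ (not_not.1 fun h => ha.2 ⟨ha.1.1.1, h⟩)
  exact fun x ⟨hxS, hxp⟩ => (em (x = u)).imp id fun hxu => ⟨⟨hxS, hxu⟩, hxp⟩

theorem active_point_strictly_in_triangle_general (P : Finset Pt) (t u v p : Pt)
    (hgp : GenPos (↑P : Set Pt))
    (hc : ConsecutiveCW (↑P : Set Pt) t u v)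
    (ha : ActiveFor (↑P : Set Pt) u p) :
    p ∈ interior (convexHull ℝ ({t, u, v} : Set Pt)) := by
  obtain ⟨htu, huv, htv, -⟩ := hc
  have ⟨hne_tu, htV, huV, _⟩ := htu
  have ⟨hne_uv, _, hvV, _⟩ := huv
  have ⟨⟨⟨hpP, hpu⟩, hpQ⟩, _⟩ := ha
  have hpt : p ≠ t := fun h => ha.2 (h ▸ htV)
  have hpv : p ≠ v := fun h => ha.2 (h ▸ hvV)
  have hind := hgp t u v htV.1 huV.1 hvV.1 hne_tu hne_uv htv
  set B := triangleBasis finrank_euclideanSpace_fin hind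
  have hspan : affineSpan ℝ (P : Set Pt) = ⊤ := top_unique <| B.tot.ge.trans <|
    affineSpan_mono ℝ <| by simp [B, insert_subset_iff, htV.1, huV.1, hvV.1]
  have coord₀ {x : Pt} (hx : x ∈ (P : Set Pt)) :=
    huv.coord_pos hgp hspan B (i := 0) (by intro j hj; fin_cases j <;> simp_all [B])
      htV.1 hne_tu htv hx
  have coord₂ {x : Pt} (hx : x ∈ (P : Set Pt)) :=
    htu.coord_pos hgp hspan B (i := 2) (by intro j hj; fin_cases j <;> simp_all [B])
      hvV.1 htv.symm hne_uv.symm hx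
  rw [← range_triangleBasis finrank_euclideanSpace_fin hind, B.interior_convexHull]
  intro i
  fin_cases i
  · exact (coord₀ hpP).2 hpu hpv
  · refine B.coord_pos_of_mem_convexHull_insert (S := ((P : Set Pt) \ {u}) \ {p}) ?_ ?_
      ha.mem_convexHull_insert hpQ
    · intro j hj
      fin_cases j
      exacts [⟨⟨htV.1, hne_tu⟩, hpt.symm⟩, absurd rfl hj, ⟨⟨hvV.1, hne_uv.symm⟩, hpv.symm⟩]
    · rintro y ⟨⟨hy, -⟩, -⟩ j hj
      fin_cases j
      exacts [(coord₀ hy).1, absurd rfl hj, (coord₂ hy).1]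
  · exact (coord₂ hpP).2 hpt hpu

theorem active_point_strictly_in_triangle (P : Finset Pt) (t u v p : Pt)
    (hgp : GenPos (↑P : Set Pt))
    (hc : ConsecutiveCW (↑P : Set Pt) t u v) (hp : p ∈ P)
    (ha : ActiveFor (↑P : Set Pt) u p) :
    p ∈ interior (convexHull ℝ ({t, u, v} : Set Pt)) :=
  active_point_strictly_in_triangle_general P t u v p hgp hc ha
end
end

section
/- Let P be a finite set of points in the plane in general position. Then every point p ∈ P is active for at most three vertices of the convex hull of P. Equivalently, since a point active for a hull vertex u lies strictly inside the triangle formed by u and its two hull neighbors, any point of P lies strictly inside at most three such triangles. -/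
open Set MeasureTheory

noncomputable section

/-!
If `p` is active for some `u`, then `p` is not a vertex of `CH(P)`, so by Carathéodory it lies in
the hull of a set `T` of at most three points of `P \ {p}`. A hull vertex `u` outside `T` cannot
have `p` active: `T ⊆ P \ {u, p}` keeps `p` inside `CH(P \ {u, p})`. So `p` is active only for
vertices in `T`.
-/

open Module

section CriticalPoints

variable (𝕜 : Type*) {E : Type*} [Field 𝕜] [LinearOrder 𝕜]
  [AddCommGroup E] [Module 𝕜 E]

def hullCriticalSet (s : Set E) (x : E) : Set E :=
  {u | x ∈ convexHull 𝕜 s ∧ x ∉ convexHull 𝕜 (s \ {u})}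

variable {𝕜}

theorem hullCriticalSet_subset {s t : Set E} {x : E} (hts : t ⊆ s)
    (hxt : x ∈ convexHull 𝕜 t) : hullCriticalSet 𝕜 s x ⊆ t := by
  intro u hu
  by_contra hut
  exact hu.2 (convexHull_mono (subset_sdiff_singleton hts hut) hxt)

theorem exists_finset_card_le_hullCriticalSet_subset [IsStrictOrderedRing 𝕜]
    [FiniteDimensional 𝕜 E] (s : Set E) (x : E) :
    ∃ t : Finset E, t.card ≤ finrank 𝕜 E + 1 ∧ hullCriticalSet 𝕜 s x ⊆ t := by
  by_cases hx : x ∈ convexHull 𝕜 s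
  · rw [convexHull_eq_union] at hx
    simp only [mem_iUnion] at hx
    obtain ⟨t, hts, hindep, hxt⟩ := hx
    refine ⟨t, ?_, hullCriticalSet_subset hts hxt⟩
    calc t.card = Fintype.card t := (Fintype.card_coe t).symm
      _ ≤ finrank 𝕜 (vectorSpan 𝕜 (range ((↑) : t → E))) + 1 := hindep.card_le_finrank_succ
      _ ≤ finrank 𝕜 E + 1 := Nat.succ_le_succ (Submodule.finrank_le _)
  · exact ⟨∅, by simp, fun u hu => absurd hu.1 hx⟩

end CriticalPoints

theorem setOf_activeFor_subset_hullCriticalSet (S : Set Pt) (p : Pt) :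
    {u | ActiveFor S u p} ⊆ hullCriticalSet ℝ (S \ {p}) p := by
  rintro u ⟨⟨⟨hpS, -⟩, hpu⟩, hnot⟩
  refine ⟨not_not.mp fun h => hnot ⟨hpS, h⟩, ?_⟩
  rwa [sdiff_sdiff_comm] at hpu

theorem active_for_at_most_three_general (P : Finset Pt)
    (p : Pt) :
    Set.ncard {u : Pt | IsHullVertex (↑P : Set Pt) u ∧ ActiveFor (↑P : Set Pt) u p} ≤ 3 := by
  obtain ⟨t, ht, hcrit⟩ := exists_finset_card_le_hullCriticalSet_subset (𝕜 := ℝ) (↑P \ {p}) p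
  have hsub : {u : Pt | IsHullVertex (↑P : Set Pt) u ∧ ActiveFor (↑P : Set Pt) u p} ⊆ t :=
    fun u hu => hcrit (setOf_activeFor_subset_hullCriticalSet (↑P) p hu.2)
  calc _ ≤ (t : Set Pt).ncard := ncard_le_ncard hsub t.finite_toSet
    _ = t.card := ncard_coe_finset t
    _ ≤ 3 := by rwa [finrank_euclideanSpace_fin] at ht

theorem active_for_at_most_three (P : Finset Pt)
    (hgp : GenPos (↑P : Set Pt)) (h4 : 4 ≤ P.card) (p : Pt) (hp : p ∈ P) :
    Set.ncard {u : Pt | IsHullVertex (↑P : Set Pt) u ∧ ActiveFor (↑P : Set Pt) u p} ≤ 3 :=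
  active_for_at_most_three_general P p
end
end

section
/- Let P be a finite set of points in the plane. Define the convex layers of P recursively: layer 1 consists of the vertices of CH(P), and layer k consists of the vertices of the convex hull of the points remaining after removing layers 1 through k−1. If p lies on layer k and q ≠ p is any other point of P, then in the convex layer decomposition of P \ {q}, the point p lies on layer k−1 or layer k. -/
open Set MeasureTheory

noncomputable section

/-- Points remaining after peeling the first `k` convex layers. -/
def peelResidual (S : Set Pt) : ℕ → Set Pt
  | 0 => S
  | k + 1 => peelResidual S k \ {p | IsHullVertex (peelResidual S k) p}

/-- The `k`-th convex layer (0-indexed: `onionLayer S 0` is the outermost layer). -/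
def onionLayer (S : Set Pt) (k : ℕ) : Set Pt :=
  {p | IsHullVertex (peelResidual S k) p}

/-!
Peeling is monotone in the point set: a hull vertex of a set that lies in a subset is a hull
vertex of the subset, so by induction every point surviving `k` peelings of `P \ {q}` survives
`k` peelings of `P`, and no point moves inward. Conversely, while `q` has not been peeled it lies
in the hull of the other remaining points, and then an exchange argument shows that deleting it
changes the vertex status of no other point. Hence every point other than `q` that survives
`k + 1` peelings of `P` survives `k` peelings of `P \ {q}`, and no point moves out by more than
one layer.
-/

section Exchange

variable {𝕜 E : Type*} [Field 𝕜] [LinearOrder 𝕜] [IsStrictOrderedRing 𝕜]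
  [AddCommGroup E] [Module 𝕜 E]

lemma mem_convexHull_of_insert_exchange {s : Set E} {x q : E} (hxq : x ≠ q)
    (hx : x ∈ convexHull 𝕜 (insert q s)) (hq : q ∈ convexHull 𝕜 (insert x s)) :
    x ∈ convexHull 𝕜 s := by
  rcases s.eq_empty_or_nonempty with rfl | hs
  · simp [hxq] at hx
  rw [convexHull_insert hs] at hx hq
  simp only [convexJoin_singleton_left, mem_iUnion₂] at hx hq
  obtain ⟨s₀, hs₀, a, b, ha, hb, hab, hx⟩ := hx
  obtain ⟨s₁, hs₁, c, d, hc, hd, hcd, hq⟩ := hq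
  -- `x = a q + b s₀` and `q = c x + d s₁` give `(1 - a c) x = a d s₁ + b s₀`, and `a c = 1`
  -- would force `x = q`.
  have hac : a * c < 1 := by
    rcases (show a ≤ 1 by linarith).lt_or_eq with ha1 | rfl
    · nlinarith
    · obtain rfl : b = 0 := by linarith
      exact absurd (by simpa using hx.symm) hxq
  have hpos : 0 < 1 - a * c := sub_pos.mpr hac
  have hcomb : (1 - a * c) • x = (a * d) • s₁ + b • s₀ := by
    linear_combination (norm := module) -hx - a • hq
  have hx_eq : x = ((1 - a * c)⁻¹ * (a * d)) • s₁ + ((1 - a * c)⁻¹ * b) • s₀ := by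
    rw [← smul_smul _ (a * d), ← smul_smul _ b, ← smul_add, ← hcomb, inv_smul_smul₀ hpos.ne']
  rw [hx_eq]
  refine convex_convexHull 𝕜 s hs₁ hs₀ (by positivity) (by positivity) ?_
  rw [← mul_add, inv_mul_eq_one₀ hpos.ne']
  linear_combination -a * hcd - hab

end Exchange

lemma isHullVertex_diff_singleton_iff {S : Set Pt} {q x : Pt}
    (hq : q ∈ convexHull ℝ (S \ {q})) (hxq : x ≠ q) :
    IsHullVertex (S \ {q}) x ↔ IsHullVertex S x := by
  have hxS : x ∈ S \ {q} ↔ x ∈ S := by simp [hxq]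
  refine and_congr hxS (not_congr ⟨fun h => convexHull_mono (by tauto_set) h, fun hx => ?_⟩)
  have hx' : x ∈ convexHull ℝ (insert q ((S \ {q}) \ {x})) := convexHull_mono (by tauto_set) hx
  have hq' : q ∈ convexHull ℝ (insert x ((S \ {q}) \ {x})) := convexHull_mono (by tauto_set) hq
  exact mem_convexHull_of_insert_exchange hxq hx' hq'

lemma IsHullVertex.of_superset {A B : Set Pt} {p : Pt} (hp : IsHullVertex B p) (hAB : A ⊆ B)
    (hpA : p ∈ A) : IsHullVertex A p :=
  ⟨hpA, fun h => hp.2 (convexHull_mono (sdiff_subset_sdiff_left hAB) h)⟩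

lemma mem_peelResidual_succ {S : Set Pt} {k : ℕ} {x : Pt} :
    x ∈ peelResidual S (k + 1) ↔
      x ∈ peelResidual S k ∧ ¬ IsHullVertex (peelResidual S k) x :=
  Iff.rfl

lemma peelResidual_succ_subset (S : Set Pt) (k : ℕ) :
    peelResidual S (k + 1) ⊆ peelResidual S k :=
  fun _ hx => (mem_peelResidual_succ.mp hx).1

lemma mem_convexHull_of_mem_peelResidual_succ {S : Set Pt} {k : ℕ} {x : Pt}
    (hx : x ∈ peelResidual S (k + 1)) : x ∈ convexHull ℝ (peelResidual S k \ {x}) := by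
  obtain ⟨hxR, hxv⟩ := mem_peelResidual_succ.mp hx
  by_contra h
  exact hxv ⟨hxR, h⟩

lemma mem_onionLayer_of_notMem_succ {S : Set Pt} {k : ℕ} {x : Pt}
    (hx : x ∈ peelResidual S k) (hx' : x ∉ peelResidual S (k + 1)) : x ∈ onionLayer S k := by
  by_contra h
  exact hx' ⟨hx, h⟩

lemma peelResidual_mono {A B : Set Pt} (hAB : A ⊆ B) (k : ℕ) :
    peelResidual A k ⊆ peelResidual B k := by
  induction k with
  | zero => exact hAB
  | succ k ih =>
    intro x hx
    obtain ⟨hxA, hxv⟩ := mem_peelResidual_succ.mp hx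
    exact ⟨ih hxA, fun hv => hxv (hv.of_superset ih hxA)⟩

lemma peelResidual_diff_singleton {S : Set Pt} {q : Pt} {k : ℕ}
    (hq : q ∈ peelResidual S (k + 1)) : peelResidual (S \ {q}) k = peelResidual S k \ {q} := by
  induction k with
  | zero => rfl
  | succ k ih =>
    have hq₁ := peelResidual_succ_subset S (k + 1) hq
    have hqR := mem_convexHull_of_mem_peelResidual_succ hq₁
    change peelResidual (S \ {q}) k \ {x | IsHullVertex (peelResidual (S \ {q}) k) x} = _
    rw [ih hq₁]
    ext x
    by_cases hxq : x = q
    · simp [hxq]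
    · simp [mem_peelResidual_succ, isHullVertex_diff_singleton_iff hqR hxq, hxq]

lemma peelResidual_succ_diff_singleton_subset (S : Set Pt) (q : Pt) (k : ℕ) :
    peelResidual S (k + 1) \ {q} ⊆ peelResidual (S \ {q}) k := by
  induction k with
  | zero => exact sdiff_subset_sdiff_left (peelResidual_succ_subset S 0)
  | succ k ih =>
    rintro x ⟨hx, hxq : x ≠ q⟩
    obtain ⟨hx₁, hxv⟩ := mem_peelResidual_succ.mp hx
    refine ⟨ih ⟨hx₁, hxq⟩, fun (hv : IsHullVertex _ x) => ?_⟩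
    by_cases hq : q ∈ peelResidual S (k + 1)
    · rw [peelResidual_diff_singleton hq,
        isHullVertex_diff_singleton_iff (mem_convexHull_of_mem_peelResidual_succ hq) hxq] at hv
      exact (mem_peelResidual_succ.mp hx₁).2 hv
    · exact hxv (hv.of_superset (fun y hy => ih ⟨hy, fun h => hq (h ▸ hy)⟩) hx₁)

theorem layer_monotone_under_deletion_general (P : Finset Pt) (p q : Pt) (k : ℕ)
    (hqp : q ≠ p) (hp : p ∈ onionLayer (↑P : Set Pt) k) :
    p ∈ onionLayer ((↑P : Set Pt) \ {q}) k ∨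
      p ∈ onionLayer ((↑P : Set Pt) \ {q}) (k - 1) := by
  by_cases hpk : p ∈ peelResidual ((↑P : Set Pt) \ {q}) k
  · exact Or.inl (IsHullVertex.of_superset hp (peelResidual_mono sdiff_subset k) hpk)
  obtain ⟨j, rfl⟩ : ∃ j, k = j + 1 :=
    Nat.exists_eq_succ_of_ne_zero fun hk => hpk (by subst hk; exact ⟨hp.1, hqp.symm⟩)
  have hpj : p ∈ peelResidual ((↑P : Set Pt) \ {q}) j :=
    peelResidual_succ_diff_singleton_subset _ q j ⟨hp.1, hqp.symm⟩
  exact Or.inr (mem_onionLayer_of_notMem_succ hpj hpk)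

theorem layer_monotone_under_deletion (P : Finset Pt) (p q : Pt) (k : ℕ)
    (hq : q ∈ P) (hqp : q ≠ p) (hp : p ∈ onionLayer (↑P : Set Pt) k) :
    p ∈ onionLayer ((↑P : Set Pt) \ {q}) k ∨
      p ∈ onionLayer ((↑P : Set Pt) \ {q}) (k - 1) :=
  layer_monotone_under_deletion_general P p q k hqp hp
end
end

section
/- Let (t, u, v) be consecutive vertices on the convex hull of a finite planar point set P in general position, and let z be a hull vertex with z ∉ {t, u, v}. Then the set of points active for z is unchanged by the deletion of u: a point p is a vertex of CH(P \ {z}) but not of CH(P) if and only if p is a vertex of CH((P \ {u}) \ {z}) but not of CH(P \ {u}). -/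
open Set MeasureTheory

noncomputable section

/-! Let `f` be the barycentric coordinate of `u` in the triangle `t u v`. Since `[t, u]` and
`[u, v]` are hull edges, the hull of `P` lies in the angle at `u` spanned by them, so it meets the
line `f = 0` only in the chord `[t, v]`, and the hull vertex `z` lies strictly on the far side,
`f z < 0 < f u`. A point of the hull with `f ≥ 0` can then be written without `z`, and one with
`f ≤ 0` without `u` (push the point along the segment from the omitted vertex until it hits the
chord). So a non-vertex of `P` that needs `z` lies strictly on `z`'s side, where deleting `u`
changes nothing. -/

section AffineSpace

variable {E : Type*} [AddCommGroup E] [Module ℝ E]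

theorem mem_convexHull_diff_singleton_of_le {G : Set E} {w x : E} {f : E →ᵃ[ℝ] ℝ} {c : ℝ}
    (hw : w ∈ G) (hwc : f w < c)
    (hlevel : ∀ y ∈ convexHull ℝ G, f y = c → y ∈ convexHull ℝ (G \ {w}))
    (hx : x ∈ convexHull ℝ G) (hxc : c ≤ f x) : x ∈ convexHull ℝ (G \ {w}) := by
  have hne : (G \ {w}).Nonempty := by
    by_contra hempty
    rw [not_nonempty_iff_eq_empty, sdiff_eq_empty] at hempty
    have hxw : x = w := by simpa using convexHull_mono hempty hx
    exact hwc.not_ge (hxw ▸ hxc)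
  have hjoin := hx
  rw [← insert_eq_of_mem hw, ← insert_sdiff_singleton, convexHull_insert hne,
    mem_convexJoin] at hjoin
  obtain ⟨w', hw', y, hy, hxy⟩ := hjoin
  rw [mem_singleton_iff.1 hw'] at hxy
  set r := (c - f w) / (f x - f w)
  have hr0 : 0 ≤ r := div_nonneg (by linarith) (by linarith)
  have hr1 : r ≤ 1 := div_le_one_of_le₀ (by linarith) (by linarith)
  set m := AffineMap.lineMap w x r with hm
  have hfm : f m = c := by
    rw [hm, AffineMap.apply_lineMap, AffineMap.lineMap_apply_ring']
    simp only [r]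
    field_simp [show f x - f w ≠ 0 by linarith]
    ring
  have hmG : m ∈ convexHull ℝ G :=
    (convex_convexHull ℝ G).segment_subset (subset_convexHull ℝ G hw) hx
      (mem_segment_iff_wbtw.2 ⟨r, ⟨hr0, hr1⟩, hm.symm⟩)
  have hmxy : Wbtw ℝ m x y :=
    (mem_segment_iff_wbtw.1 hxy).trans_left_right ⟨r, ⟨hr0, hr1⟩, hm.symm⟩
  exact (convex_convexHull ℝ _).segment_subset (hlevel m hmG hfm) hy hmxy.mem_segment

variable {T : Set E} {u z : E} {f : E →ᵃ[ℝ] ℝ}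

theorem convexHull_subset_union_convexHull_diff
    (hlevel : ∀ y ∈ convexHull ℝ T, f y = 0 → y ∈ convexHull ℝ (T \ {u, z}))
    (hu : u ∈ T) (hz : z ∈ T) (hfu : 0 < f u) (hfz : f z < 0) :
    convexHull ℝ T ⊆ convexHull ℝ (T \ {z}) ∪ convexHull ℝ (T \ {u}) := by
  intro x hx
  rcases le_or_gt 0 (f x) with hfx | hfx
  · refine Or.inl (mem_convexHull_diff_singleton_of_le hz hfz (fun y hy hfy => ?_) hx hfx)
    exact convexHull_mono (sdiff_subset_sdiff_right (by simp)) (hlevel y hy hfy)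
  · refine Or.inr (mem_convexHull_diff_singleton_of_le (f := -f) (c := 0) hu
      (by simpa using hfu) (fun y hy hfy => ?_) hx (by simpa using hfx.le))
    exact convexHull_mono (sdiff_subset_sdiff_right (by simp)) (hlevel y hy (by simpa using hfy))

theorem convexHull_diff_inter_convexHull_diff_subset
    (hlevel : ∀ y ∈ convexHull ℝ T, f y = 0 → y ∈ convexHull ℝ (T \ {u, z}))
    (hu : u ∈ T) (hz : z ∈ T) (hfu : 0 < f u) (hfz : f z < 0) (hzu : z ≠ u) :
    convexHull ℝ (T \ {u}) ∩ convexHull ℝ (T \ {z}) ⊆ convexHull ℝ ((T \ {u}) \ {z}) := by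
  have hpair : T \ {u, z} = (T \ {u}) \ {z} := by rw [sdiff_sdiff, ← insert_eq]
  rintro x ⟨hxu, hxz⟩
  rcases le_or_gt 0 (f x) with hfx | hfx
  · refine mem_convexHull_diff_singleton_of_le ⟨hz, hzu⟩ hfz (fun y hy hfy => ?_) hxu hfx
    exact hpair ▸ hlevel y (convexHull_mono sdiff_subset hy) hfy
  · rw [sdiff_sdiff_comm]
    refine mem_convexHull_diff_singleton_of_le (f := -f) (c := 0) ⟨hu, hzu.symm⟩
      (by simpa using hfu) (fun y hy hfy => ?_) hxz (by simpa using hfx.le)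
    rw [sdiff_sdiff_comm, ← hpair]
    exact hlevel y (convexHull_mono sdiff_subset hy) (by simpa using hfy)

end AffineSpace

section NormedSpace

variable {E : Type*} [NormedAddCommGroup E] [NormedSpace ℝ E]

theorem exists_support_of_segment_subset_frontier {K : Set E} (hK : Convex ℝ K)
    (hint : (interior K).Nonempty) {a b : E} (hab : segment ℝ a b ⊆ frontier K) :
    ∃ g : E →L[ℝ] ℝ, g a = g b ∧ (∀ x ∈ K, g x ≤ g a) ∧ ∀ x ∈ interior K, g x < g a := by
  have hm : midpoint ℝ a b ∉ interior K := (hab (midpoint_mem_segment a b)).2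
  obtain ⟨g, hg⟩ := geometric_hahn_banach_open_point hK.interior isOpen_interior hm
  have hle : ∀ x ∈ closure K, g x ≤ g (midpoint ℝ a b) := by
    rw [← hK.closure_interior_eq_closure_of_nonempty_interior hint]
    exact closure_minimal (fun x hx => (hg x hx).le) (isClosed_le g.continuous continuous_const)
  have hga := hle a (frontier_subset_closure (hab (left_mem_segment ℝ a b)))
  have hgb := hle b (frontier_subset_closure (hab (right_mem_segment ℝ a b)))
  have hgm : g (midpoint ℝ a b) = (g a + g b) / 2 := by
    simp only [midpoint_eq_smul_add, invOf_eq_inv, smul_add, map_add, map_smul, smul_eq_mul]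
    ring
  have hma : g (midpoint ℝ a b) = g a := by linarith
  exact ⟨g, by linarith, fun x hx => hma ▸ hle x (subset_closure hx), fun x hx => hma ▸ hg x hx⟩

theorem AffineBasis.coord_nonneg_of_segment_subset_frontier (b : AffineBasis (Fin 3) ℝ E)
    {A : Set E} (hbA : range b ⊆ A) {i j k : Fin 3} (hij : i ≠ j) (hik : i ≠ k) (hjk : j ≠ k)
    (hedge : segment ℝ (b i) (b j) ⊆ frontier (convexHull ℝ A)) {x : E}
    (hx : x ∈ convexHull ℝ A) : 0 ≤ b.coord k x := by
  have hint : (interior (convexHull ℝ A)).Nonempty :=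
    ⟨_, interior_mono (convexHull_mono hbA) b.centroid_mem_interior_convexHull⟩
  obtain ⟨g, hgij, hle, hlt⟩ :=
    exists_support_of_segment_subset_frontier (convex_convexHull ℝ A) hint hedge
  have hexpand : ∀ y, g y - g (b i) = b.coord k y * (g (b k) - g (b i)) := by
    intro y
    have hgy : g y = ∑ l, b.coord l y * g (b l) := by
      conv_lhs => rw [← b.linear_combination_coord_eq_self y]
      simp only [map_sum, map_smul, smul_eq_mul]
    calc g y - g (b i) = ∑ l, b.coord l y * (g (b l) - g (b i)) := by
          simp [hgy, mul_sub, Finset.sum_sub_distrib, ← Finset.sum_mul, b.sum_coord_apply_eq_one]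
      _ = b.coord k y * (g (b k) - g (b i)) := by
          refine Finset.sum_eq_single k (fun l _ hlk => ?_) (by simp)
          have hfin : ∀ i j k l : Fin 3, i ≠ j → i ≠ k → j ≠ k → l ≠ k → l = i ∨ l = j := by
            decide
          rcases hfin i j k l hij hik hjk hlk with rfl | rfl <;> simp [hgij]
  obtain ⟨c, hc⟩ := hint
  have hk : g (b k) - g (b i) < 0 := by
    refine lt_of_le_of_ne (sub_nonpos.2 (hle _ (subset_convexHull ℝ A (hbA ⟨k, rfl⟩)))) ?_
    intro h0
    have := hexpand c
    rw [h0, mul_zero, sub_eq_zero] at this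
    exact (hlt c hc).ne this
  refine nonneg_of_mul_nonpos_left ?_ hk
  rw [← hexpand x]
  exact sub_nonpos.2 (hle x hx)

end NormedSpace

theorem not_isHullVertex_of_wbtw {S : Set Pt} {x y w : Pt} (h : Wbtw ℝ x y w) (hx : x ∈ S)
    (hw : w ∈ S) (hxy : x ≠ y) (hyw : y ≠ w) : ¬ IsHullVertex S y := fun hy =>
  hy.2 ((convex_convexHull ℝ _).segment_subset (subset_convexHull ℝ (S \ {y}) ⟨hx, hxy⟩)
    (subset_convexHull ℝ (S \ {y}) ⟨hw, hyw.symm⟩) h.mem_segment)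

theorem not_collinear_of_isHullVertex {S : Set Pt} {a b c : Pt} (ha : IsHullVertex S a)
    (hb : IsHullVertex S b) (hc : IsHullVertex S c) (hab : a ≠ b) (hbc : b ≠ c) (hac : a ≠ c) :
    ¬ Collinear ℝ ({a, b, c} : Set Pt) := by
  intro hcol
  rcases hcol.wbtw_or_wbtw_or_wbtw with h | h | h
  · exact not_isHullVertex_of_wbtw h ha.1 hc.1 hab hbc hb
  · exact not_isHullVertex_of_wbtw h hb.1 ha.1 hbc hac.symm hc
  · exact not_isHullVertex_of_wbtw h hc.1 hb.1 hac.symm hab ha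

theorem IsHullVertex.mem_diff_of_mem_convexHull {S : Set Pt} {p q : Pt} (hq : IsHullVertex S q)
    (hp : p ∈ convexHull ℝ (S \ {p})) : q ∈ S \ {p} :=
  ⟨hq.1, fun h => hq.2 (mem_singleton_iff.1 h ▸ hp)⟩

theorem activeFor_iff {S : Set Pt} {z p : Pt} :
    ActiveFor S z p ↔ p ∈ S ∧ p ≠ z ∧ p ∈ convexHull ℝ (S \ {p}) ∧
      p ∉ convexHull ℝ ((S \ {p}) \ {z}) := by
  simp only [ActiveFor, IsHullVertex, mem_sdiff, mem_singleton_iff, sdiff_sdiff_comm (t := {z})]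
  tauto

theorem exists_affineMap_separating_chord {A : Set Pt} {t u v z : Pt}
    (ht : IsHullVertex A t) (hu : IsHullVertex A u) (hv : IsHullVertex A v)
    (hz : IsHullVertex A z) (htu : t ≠ u) (huv : u ≠ v) (htv : t ≠ v)
    (hzt : z ≠ t) (hzu : z ≠ u) (hzv : z ≠ v)
    (htu_edge : segment ℝ t u ⊆ frontier (convexHull ℝ A))
    (huv_edge : segment ℝ u v ⊆ frontier (convexHull ℝ A)) :
    ∃ f : Pt →ᵃ[ℝ] ℝ, 0 < f u ∧ f z < 0 ∧ ∀ y ∈ convexHull ℝ A, f y = 0 → y ∈ segment ℝ t v := by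
  have hind : AffineIndependent ℝ ![t, u, v] :=
    affineIndependent_iff_not_collinear_set.2 (not_collinear_of_isHullVertex ht hu hv htu huv htv)
  let b : AffineBasis (Fin 3) ℝ Pt :=
    ⟨![t, u, v], hind, by rw [hind.affineSpan_eq_top_iff_card_eq_finrank_add_one]; simp⟩
  have hb : ⇑b = ![t, u, v] := rfl
  have hbA : range b ⊆ A := by
    rintro _ ⟨i, rfl⟩
    fin_cases i
    exacts [ht.1, hu.1, hv.1]
  have hnonneg : ∀ x ∈ convexHull ℝ A, 0 ≤ b.coord 0 x ∧ 0 ≤ b.coord 2 x := fun x hx =>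
    ⟨b.coord_nonneg_of_segment_subset_frontier hbA (i := 1) (j := 2) (by decide) (by decide)
      (by decide) (by simpa [hb] using huv_edge) hx,
     b.coord_nonneg_of_segment_subset_frontier hbA (i := 0) (j := 1) (by decide) (by decide)
      (by decide) (by simpa [hb] using htu_edge) hx⟩
  refine ⟨b.coord 1, by simp [show u = b 1 from rfl], ?_, ?_⟩
  · by_contra! hz1
    have hzb : z ∈ convexHull ℝ (range b) := by
      rw [b.convexHull_eq_nonneg_coord]
      have := hnonneg z (subset_convexHull ℝ A hz.1)
      intro i
      fin_cases i
      exacts [this.1, hz1, this.2]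
    refine hz.2 (convexHull_mono ?_ hzb)
    rintro _ ⟨i, rfl⟩
    fin_cases i
    exacts [⟨ht.1, hzt.symm⟩, ⟨hu.1, hzu.symm⟩, ⟨hv.1, hzv.symm⟩]
  · intro y hy hy1
    have hcomb := b.linear_combination_coord_eq_self y
    have hsum := b.sum_coord_apply_eq_one y
    simp only [Fin.sum_univ_three, hy1, hb] at hcomb hsum
    exact ⟨_, _, (hnonneg y hy).1, (hnonneg y hy).2, by simpa using hsum, by simpa using hcomb⟩

theorem segment_subset_convexHull_diff_of_mem_convexHull {A s : Set Pt} {t v p : Pt}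
    (ht : IsHullVertex A t) (hv : IsHullVertex A v) (hts : t ∉ s) (hvs : v ∉ s)
    (hp : p ∈ convexHull ℝ (A \ {p})) : segment ℝ t v ⊆ convexHull ℝ ((A \ {p}) \ s) :=
  (convex_convexHull ℝ _).segment_subset
    (subset_convexHull ℝ _ (show t ∈ (A \ {p}) \ s from ⟨ht.mem_diff_of_mem_convexHull hp, hts⟩))
    (subset_convexHull ℝ _ (show v ∈ (A \ {p}) \ s from ⟨hv.mem_diff_of_mem_convexHull hp, hvs⟩))

theorem active_set_unchanged_for_nonneighbor_general (P : Finset Pt)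
    (t u v z : Pt)
    (hc : ConsecutiveCW (↑P : Set Pt) t u v)
    (hz : IsHullVertex (↑P : Set Pt) z)
    (hzn : z ∉ ({t, u, v} : Set Pt)) (p : Pt) :
    ActiveFor (↑P : Set Pt) z p ↔ ActiveFor ((↑P : Set Pt) \ {u}) z p := by
  obtain ⟨⟨htu, ht, hu, htu_edge⟩, ⟨huv, -, hv, huv_edge⟩, htv, -⟩ := hc
  simp only [mem_insert_iff, mem_singleton_iff, not_or] at hzn
  obtain ⟨hzt, hzu, hzv⟩ := hzn
  obtain ⟨f, hfu, hfz, hchord⟩ :=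
    exists_affineMap_separating_chord ht hu hv hz htu huv htv hzt hzu hzv htu_edge huv_edge
  have hlevel (hp : p ∈ convexHull ℝ (↑P \ {p})) :
      ∀ y ∈ convexHull ℝ (↑P \ {p}), f y = 0 → y ∈ convexHull ℝ ((↑P \ {p}) \ {u, z}) :=
    fun y hy hfy => segment_subset_convexHull_diff_of_mem_convexHull ht hv
      (by simp [htu, Ne.symm hzt]) (by simp [huv.symm, Ne.symm hzv]) hp
      (hchord y (convexHull_mono sdiff_subset hy) hfy)
  rw [activeFor_iff, activeFor_iff, sdiff_sdiff_comm (t := {u}) (u := {p})]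
  constructor
  · rintro ⟨hpP, hpz, hpT, hpTz⟩
    have huT := hu.mem_diff_of_mem_convexHull hpT
    refine ⟨⟨hpP, Ne.symm huT.2⟩, hpz, ?_,
      fun h => hpTz (convexHull_mono (sdiff_subset_sdiff_left sdiff_subset) h)⟩
    exact (convexHull_subset_union_convexHull_diff (hlevel hpT) huT
      (hz.mem_diff_of_mem_convexHull hpT) hfu hfz hpT).resolve_left hpTz
  · rintro ⟨⟨hpP, -⟩, hpz, hpTu, hpTuz⟩
    have hpT := convexHull_mono sdiff_subset hpTu
    exact ⟨hpP, hpz, hpT, fun hpTz => hpTuz (convexHull_diff_inter_convexHull_diff_subset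
      (hlevel hpT) (hu.mem_diff_of_mem_convexHull hpT) (hz.mem_diff_of_mem_convexHull hpT)
      hfu hfz hzu ⟨hpTu, hpTz⟩)⟩

theorem active_set_unchanged_for_nonneighbor (P : Finset Pt)
    (hgp : GenPos (↑P : Set Pt)) (t u v z : Pt)
    (hc : ConsecutiveCW (↑P : Set Pt) t u v)
    (hz : IsHullVertex (↑P : Set Pt) z)
    (hzn : z ∉ ({t, u, v} : Set Pt)) (p : Pt) :
    ActiveFor (↑P : Set Pt) z p ↔ ActiveFor ((↑P : Set Pt) \ {u}) z p :=
  active_set_unchanged_for_nonneighbor_general P t u v z hc hz hzn p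
end
end

section
/- Let (t, u, v) be consecutive vertices on the convex hull of a finite planar point set P in general position, and let z be a hull vertex not in {t, u, v}. Then the sensitivity of z, defined as area(CH(P)) − area(CH(P \ {z})), is unchanged when u is deleted: area(CH(P)) − area(CH(P \ {z})) = area(CH(P \ {u})) − area(CH(P \ {u, z})). -/
/-!
Take a linear functional `g` that is constant on the line `tv` and larger at `u`. The supporting
lines of the hull edges `tu` and `uv` confine the part of `CH(P)` with `g ≥ g t` to the triangle
`tuv`; hence the vertex `z` lies strictly on the other side, and `CH(P)` meets the line `tv` only
in the segment `[t, v]`. Deleting a point that lies strictly on one side of the line changes the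
hull only on that side, so `CH(P \ {u}) ∪ CH(P \ {z}) = CH(P)` and
`CH(P \ {u}) ∩ CH(P \ {z}) = CH(P \ {u, z})`; inclusion–exclusion for the area finishes.
-/

open Set MeasureTheory

noncomputable section

section Cut

variable {E : Type*} [AddCommGroup E] [Module ℝ E]

theorem mem_convexHull_diff_singleton_of_le_s8 {S : Set E} {a x : E} {g : E →ₗ[ℝ] ℝ} {c : ℝ}
    (ha : c < g a) (hline : ∀ y ∈ convexHull ℝ S, g y = c → y ∈ convexHull ℝ (S \ {a}))
    (hx : x ∈ convexHull ℝ S) (hgx : g x ≤ c) : x ∈ convexHull ℝ (S \ {a}) := by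
  by_cases haS : a ∈ S
  swap
  · rwa [sdiff_singleton_eq_self haS]
  have hS : S = insert a (S \ {a}) := (insert_sdiff_self_of_mem haS).symm
  rcases (S \ {a}).eq_empty_or_nonempty with hT | hT
  · rw [hS, hT, insert_empty_eq, convexHull_singleton, mem_singleton_iff] at hx
    exact absurd (hx ▸ hgx) (not_le.2 ha)
  have hx' := hx
  rw [hS, convexHull_insert hT, mem_convexJoin] at hx'
  obtain ⟨b, hb, y, hy, p, q, hp, hq, hpq, rfl⟩ := hx'
  obtain rfl : a = b := (mem_singleton_iff.1 hb).symm
  obtain rfl : q = 1 - p := by linarith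
  rcases hp.eq_or_lt with rfl | hp
  · simpa using hy
  have hgx' : p * g a + (1 - p) * g y ≤ c := by simpa using hgx
  have hgy : g y < c := by
    by_contra! h
    nlinarith [mul_le_mul_of_nonneg_left h hq, mul_lt_mul_of_pos_left ha hp]
  have hne : g a - g y ≠ 0 := by linarith
  -- `m` is where the segment from `y` to `a` crosses the level line `g = c`;
  -- `x` lies between `y` and `m`.
  set s := (c - g y) / (g a - g y) with hs
  have hs_pos : 0 < s := div_pos (by linarith) (by linarith)
  have hps : p ≤ s := by rw [hs, le_div_iff₀ (by linarith)]; nlinarith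
  have hm : s • a + (1 - s) • y ∈ convexHull ℝ (S \ {a}) := by
    refine hline _ ((convex_convexHull ℝ S) (subset_convexHull ℝ S haS)
      (convexHull_mono sdiff_subset hy) hs_pos.le ?_ (by ring)) ?_
    · rw [sub_nonneg, hs, div_le_one (by linarith)]; linarith
    · simp only [map_add, map_smul, smul_eq_mul, hs]
      field_simp
      ring
  convert (convex_convexHull ℝ _) hm hy (div_nonneg hp.le hs_pos.le)
    (sub_nonneg.2 ((div_le_one hs_pos).2 hps)) (by ring) using 1
  match_scalars
  · field_simp
  · field_simp
    ring

theorem mem_convexHull_diff_singleton_of_ge {S : Set E} {a x : E} {g : E →ₗ[ℝ] ℝ} {c : ℝ}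
    (ha : g a < c) (hline : ∀ y ∈ convexHull ℝ S, g y = c → y ∈ convexHull ℝ (S \ {a}))
    (hx : x ∈ convexHull ℝ S) (hgx : c ≤ g x) : x ∈ convexHull ℝ (S \ {a}) :=
  mem_convexHull_diff_singleton_of_le_s8 (g := -g) (c := -c) (by simpa)
    (fun y hy hgy => hline y hy (by simpa using hgy)) hx (by simpa)

variable {P : Set E} {u z : E} {g : E →ₗ[ℝ] ℝ} {c : ℝ}

theorem convexHull_diff_union_convexHull_diff (hz : g z < c) (hu : c < g u)
    (hline : ∀ y ∈ convexHull ℝ P, g y = c → y ∈ convexHull ℝ ((P \ {u}) \ {z})) :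
    convexHull ℝ (P \ {u}) ∪ convexHull ℝ (P \ {z}) = convexHull ℝ P := by
  refine (union_subset (convexHull_mono sdiff_subset) (convexHull_mono sdiff_subset)).antisymm
    fun x hx => ?_
  rcases le_total (g x) c with hgx | hgx
  · refine .inl (mem_convexHull_diff_singleton_of_le_s8 hu (fun y hy hgy => ?_) hx hgx)
    exact convexHull_mono sdiff_subset (hline y hy hgy)
  · refine .inr (mem_convexHull_diff_singleton_of_ge hz (fun y hy hgy => ?_) hx hgx)
    exact convexHull_mono (by rw [sdiff_sdiff_comm]; exact sdiff_subset) (hline y hy hgy)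

theorem convexHull_diff_inter_convexHull_diff (hz : g z < c) (hu : c < g u)
    (hline : ∀ y ∈ convexHull ℝ P, g y = c → y ∈ convexHull ℝ ((P \ {u}) \ {z})) :
    convexHull ℝ (P \ {u}) ∩ convexHull ℝ (P \ {z}) = convexHull ℝ ((P \ {u}) \ {z}) := by
  refine Subset.antisymm (fun x ⟨hxu, hxz⟩ => ?_) (subset_inter (convexHull_mono sdiff_subset)
    (convexHull_mono (by rw [sdiff_sdiff_comm]; exact sdiff_subset)))
  rcases le_total (g x) c with hgx | hgx
  · rw [sdiff_sdiff_comm]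
    refine mem_convexHull_diff_singleton_of_le_s8 hu (fun y hy hgy => ?_) hxz hgx
    rw [← sdiff_sdiff_comm]
    exact hline y (convexHull_mono sdiff_subset hy) hgy
  · exact mem_convexHull_diff_singleton_of_ge hz
      (fun y hy hgy => hline y (convexHull_mono sdiff_subset hy) hgy) hxu hgx

end Cut

section Wedge

variable {E : Type*} [AddCommGroup E] [Module ℝ E] {t u v : E}

theorem exists_eq_add_smul_sub_add_smul_sub (h : affineSpan ℝ {t, u, v} = ⊤) (x : E) :
    ∃ β γ : ℝ, x = t + β • (u - t) + γ • (v - t) := by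
  have hx : x - t ∈ vectorSpan ℝ {t, u, v} := by
    rw [← direction_affineSpan, h, AffineSubspace.direction_top]; trivial
  rw [vectorSpan_eq_span_vsub_set_right ℝ (mem_insert t _)] at hx
  simp only [image_insert_eq, image_singleton, vsub_eq_sub, sub_self, Submodule.span_insert_zero,
    Submodule.mem_span_pair] at hx
  obtain ⟨β, γ, hβγ⟩ := hx
  exact ⟨β, γ, by rw [add_assoc, hβγ]; abel⟩

theorem LinearMap.apply_ne_of_affineSpan_eq_top (h : affineSpan ℝ {t, u, v} = ⊤)
    {f : E →ₗ[ℝ] ℝ} (hf : f ≠ 0) (htu : f t = f u) : f v ≠ f t := by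
  intro hvt
  have hconst : ∀ x, f x = f t := fun x => by
    obtain ⟨β, γ, rfl⟩ := exists_eq_add_smul_sub_add_smul_sub h x
    simp [← htu, hvt]
  exact hf (LinearMap.ext fun x => by simp [hconst x, ← hconst 0])

theorem add_smul_sub_add_smul_sub_mem_convexHull {β γ : ℝ} (hβ : 0 ≤ β) (hγ : 0 ≤ γ)
    (hβγ : β + γ ≤ 1) : t + β • (u - t) + γ • (v - t) ∈ convexHull ℝ {t, u, v} := by
  have := (convex_convexHull ℝ ({t, u, v} : Set E)).sum_mem (t := Finset.univ)
    (w := ![1 - β - γ, β, γ]) (z := ![t, u, v]) ?_ ?_ ?_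
  · convert this using 1
    simp [Fin.sum_univ_three]
    module
  · intro i _; fin_cases i <;> simp <;> linarith
  · simp [Fin.sum_univ_three]; ring
  · intro i _; fin_cases i <;> exact subset_convexHull ℝ _ (by simp)

/-- `f₁ ≤ f₁ t` and `f₂ ≤ f₂ u` are the supporting half-planes of the edges `tu` and `uv`. -/
theorem exists_cut_of_wedge (hspan : affineSpan ℝ {t, u, v} = ⊤) {f₁ f₂ : E →ₗ[ℝ] ℝ}
    (htu : f₁ t = f₁ u) (hvt : f₁ v < f₁ t) (huv : f₂ u = f₂ v) (htu' : f₂ t < f₂ u) :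
    ∃ g : E →ₗ[ℝ] ℝ, g t < g u ∧ ∀ x, f₁ x ≤ f₁ t → f₂ x ≤ f₂ u →
      (g t ≤ g x → x ∈ convexHull ℝ {t, u, v}) ∧ (g x = g t → x ∈ segment ℝ t v) := by
  have hAB : 0 < (f₁ t - f₁ v) * (f₂ u - f₂ t) := mul_pos (by linarith) (by linarith)
  -- chosen so that `g t = g v`
  set g := (f₂ u - f₂ t) • f₁ + (f₁ t - f₁ v) • f₂ with hg
  have hgx : ∀ β γ : ℝ, g (t + β • (u - t) + γ • (v - t)) - g t =
      (f₁ t - f₁ v) * (f₂ u - f₂ t) * β := fun β γ => by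
    simp only [hg, LinearMap.add_apply, LinearMap.smul_apply, map_add, map_smul, map_sub,
      smul_eq_mul, ← htu, ← huv]
    ring
  refine ⟨g, sub_pos.1 ((by simpa using hgx 1 0 : g u - g t = _) ▸ hAB), fun x h₁ h₂ => ?_⟩
  obtain ⟨β, γ, rfl⟩ := exists_eq_add_smul_sub_add_smul_sub hspan x
  simp only [map_add, map_smul, map_sub, smul_eq_mul, ← htu, ← huv] at h₁ h₂
  have hγ : 0 ≤ γ := by nlinarith
  have hβγ : β + γ ≤ 1 := by nlinarith
  refine ⟨fun h => add_smul_sub_add_smul_sub_mem_convexHull ?_ hγ hβγ, fun h => ?_⟩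
  · nlinarith [hgx β γ]
  · obtain rfl : β = 0 := by
      have := hgx β γ
      rw [h, sub_self, eq_comm, mul_eq_zero] at this
      exact this.resolve_left hAB.ne'
    rw [segment_eq_image']
    exact ⟨γ, ⟨hγ, by linarith⟩, by simp⟩

end Wedge

theorem affineSpan_eq_top_of_not_collinear {E : Type*} [AddCommGroup E] [Module ℝ E]
    [FiniteDimensional ℝ E] (hE : Module.finrank ℝ E = 2) {t u v : E}
    (h : ¬ Collinear ℝ {t, u, v}) : affineSpan ℝ {t, u, v} = ⊤ := by
  have := (affineIndependent_iff_not_collinear_set.2 h).affineSpan_eq_top_iff_card_eq_finrank_add_one.2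
    (by simp [hE])
  rwa [Matrix.range_cons, Matrix.range_cons_cons_empty, singleton_union] at this

section Support

variable {E : Type*} [NormedAddCommGroup E] [NormedSpace ℝ E]

theorem exists_le_of_segment_subset_frontier {C : Set E} (hC : Convex ℝ C)
    (hint : (interior C).Nonempty) {a b : E} (ha : a ∈ C) (hb : b ∈ C)
    (hab : segment ℝ a b ⊆ frontier C) :
    ∃ f : E →ₗ[ℝ] ℝ, f ≠ 0 ∧ (∀ y ∈ C, f y ≤ f a) ∧ f a = f b := by
  have hm : midpoint ℝ a b ∉ interior C := (hab (midpoint_mem_segment a b)).2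
  obtain ⟨f, r, hf, hle, hge⟩ := geometric_hahn_banach_of_nonempty_interior hC (convex_singleton _)
    (disjoint_singleton_right.2 hm) hint (singleton_nonempty _)
  have hfm : f (midpoint ℝ a b) = (f a + f b) / 2 := by
    rw [midpoint_eq_smul_add, map_smul, map_add]; simp; ring
  have hra := hle a ha
  have hrb := hle b hb
  have hrm := hge _ rfl
  refine ⟨f, fun h => hf (ContinuousLinearMap.coe_injective h), fun y hy => ?_, ?_⟩
  all_goals simp only [ContinuousLinearMap.coe_coe]
  · linarith [hle y hy]
  · linarith

theorem exists_cut_of_segment_subset_frontier [FiniteDimensional ℝ E] {P : Set E} {t u v : E}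
    (hspan : affineSpan ℝ {t, u, v} = ⊤) (ht : t ∈ P) (hu : u ∈ P) (hv : v ∈ P)
    (htu : segment ℝ t u ⊆ frontier (convexHull ℝ P))
    (huv : segment ℝ u v ⊆ frontier (convexHull ℝ P)) :
    ∃ g : E →ₗ[ℝ] ℝ, g t < g u ∧
      (∀ x ∈ convexHull ℝ P, g t ≤ g x → x ∈ convexHull ℝ {t, u, v}) ∧
      (∀ x ∈ convexHull ℝ P, g x = g t → x ∈ segment ℝ t v) := by
  have hint : (interior (convexHull ℝ P)).Nonempty :=
    interior_convexHull_nonempty_iff_affineSpan_eq_top.2 <| top_unique <|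
      hspan ▸ affineSpan_mono ℝ (insert_subset ht (insert_subset hu (singleton_subset_iff.2 hv)))
  have hP := subset_convexHull ℝ P
  obtain ⟨f₁, hf₁, hle₁, htu₁⟩ := exists_le_of_segment_subset_frontier (convex_convexHull ℝ P)
    hint (hP ht) (hP hu) htu
  obtain ⟨f₂, hf₂, hle₂, huv₂⟩ := exists_le_of_segment_subset_frontier (convex_convexHull ℝ P)
    hint (hP hu) (hP hv) huv
  have hvt₁ : f₁ v < f₁ t :=
    (hle₁ v (hP hv)).lt_of_ne (f₁.apply_ne_of_affineSpan_eq_top hspan hf₁ htu₁)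
  have htu₂ : f₂ t < f₂ u := (hle₂ t (hP ht)).lt_of_ne <|
    f₂.apply_ne_of_affineSpan_eq_top (by rwa [insert_comm, pair_comm] at hspan) hf₂ huv₂
  obtain ⟨g, hgu, hcut⟩ := exists_cut_of_wedge hspan htu₁ hvt₁ huv₂ htu₂
  exact ⟨g, hgu, fun x hx => (hcut x (hle₁ x hx) (hle₂ x hx)).1,
    fun x hx => (hcut x (hle₁ x hx) (hle₂ x hx)).2⟩

end Support

theorem MeasureTheory.measure_union_sub_eq_sub_measure_inter {α : Type*} [MeasurableSpace α]
    {μ : Measure α} {A B : Set α} (hB : MeasurableSet B) (hA : μ A ≠ ⊤) (hB' : μ B ≠ ⊤) :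
    μ (A ∪ B) - μ B = μ A - μ (A ∩ B) := by
  have hAB : μ (A ∩ B) ≠ ⊤ := ne_top_of_le_ne_top hA (measure_mono inter_subset_left)
  refine ENNReal.sub_eq_of_eq_add hB' ?_
  rw [ENNReal.sub_add_eq_add_sub (measure_mono inter_subset_left) hAB]
  exact (ENNReal.sub_eq_of_eq_add hAB (measure_union_add_inter A hB).symm).symm

theorem measure_convexHull_sub_eq_of_separated {E : Type*} [NormedAddCommGroup E]
    [NormedSpace ℝ E] [MeasurableSpace E] [BorelSpace E] {μ : Measure E}
    [IsFiniteMeasureOnCompacts μ] {P : Set E} (hP : P.Finite) {u z : E} {g : E →ₗ[ℝ] ℝ} {c : ℝ}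
    (hz : g z < c) (hu : c < g u)
    (hline : ∀ y ∈ convexHull ℝ P, g y = c → y ∈ convexHull ℝ ((P \ {u}) \ {z})) :
    μ (convexHull ℝ P) - μ (convexHull ℝ (P \ {z})) =
      μ (convexHull ℝ (P \ {u})) - μ (convexHull ℝ ((P \ {u}) \ {z})) := by
  have hfinite : ∀ S ⊆ P, μ (convexHull ℝ S) ≠ ⊤ := fun S hS =>
    ((hP.subset hS).isCompact_convexHull ℝ).measure_lt_top.ne
  rw [← convexHull_diff_union_convexHull_diff hz hu hline,
    ← convexHull_diff_inter_convexHull_diff hz hu hline]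
  exact measure_union_sub_eq_sub_measure_inter
    (hP.sdiff.isCompact_convexHull ℝ).isClosed.measurableSet
    (hfinite _ sdiff_subset) (hfinite _ sdiff_subset)

theorem sensitivity_unchanged_for_nonneighbor (P : Finset Pt)
    (hgp : GenPos (↑P : Set Pt)) (t u v z : Pt)
    (hc : ConsecutiveCW (↑P : Set Pt) t u v)
    (hz : IsHullVertex (↑P : Set Pt) z)
    (hzn : z ∉ ({t, u, v} : Set Pt)) :
    hullArea (↑P : Set Pt) - hullArea ((↑P : Set Pt) \ {z}) =
      hullArea ((↑P : Set Pt) \ {u}) - hullArea (((↑P : Set Pt) \ {u}) \ {z}) := by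
  obtain ⟨⟨htu, ⟨ht, -⟩, ⟨hu, -⟩, htu_edge⟩, ⟨huv, -, ⟨hv, -⟩, huv_edge⟩, htv, -⟩ := hc
  obtain ⟨hzP, hz_ext⟩ := hz
  simp only [mem_insert_iff, mem_singleton_iff, not_or] at hzn
  obtain ⟨hzt, hzu, hzv⟩ := hzn
  have hspan := affineSpan_eq_top_of_not_collinear finrank_euclideanSpace_fin
    (hgp t u v ht hu hv htu huv htv)
  obtain ⟨g, hgu, htriangle, hsegment⟩ :=
    exists_cut_of_segment_subset_frontier hspan ht hu hv htu_edge huv_edge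
  have hgz : g z < g t := by
    by_contra! h
    refine hz_ext (convexHull_mono ?_ (htriangle z (subset_convexHull ℝ _ hzP) h))
    rintro p (rfl | rfl | rfl)
    exacts [⟨ht, Ne.symm hzt⟩, ⟨hu, Ne.symm hzu⟩, ⟨hv, Ne.symm hzv⟩]
  refine measure_convexHull_sub_eq_of_separated P.finite_toSet hgz hgu fun y hy hgy => ?_
  refine convexHull_mono ?_ (convexHull_pair (𝕜 := ℝ) t v ▸ hsegment y hy hgy)
  rintro p (rfl | rfl)
  exacts [⟨⟨ht, htu⟩, Ne.symm hzt⟩, ⟨⟨hv, Ne.symm huv⟩, Ne.symm hzv⟩]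
end
end

section
/- Let P be a finite planar point set in general position, let u and v be distinct vertices of the convex hull of P, and let p be a point that is active for u but not active for v (with respect to P). Then after deleting v, p is active for u with respect to P \ {v}: p is a vertex of CH((P \ {v}) \ {u}) but not a vertex of CH(P \ {v}). -/
open Set MeasureTheory

noncomputable section

lemma IsHullVertex.of_subset {S T : Set Pt} {p : Pt} (h : IsHullVertex S p) (hTS : T ⊆ S)
    (hp : p ∈ T) : IsHullVertex T p :=
  ⟨hp, fun hc => h.2 (convexHull_mono (sdiff_subset_sdiff_left hTS) hc)⟩

lemma ActiveFor.ne_of_isHullVertex {S : Set Pt} {u v p : Pt} (h : ActiveFor S u p)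
    (hv : IsHullVertex S v) : p ≠ v := by
  rintro rfl
  exact h.2 hv

theorem still_active_general (P : Finset Pt)
    (u v p : Pt)
    (hv : IsHullVertex (↑P : Set Pt) v)
    (hpu : ActiveFor (↑P : Set Pt) u p)
    (hpv : ¬ ActiveFor (↑P : Set Pt) v p) :
    ActiveFor ((↑P : Set Pt) \ {v}) u p := by
  have hpv_ne : p ≠ v := hpu.ne_of_isHullVertex hv
  obtain ⟨hp_vertex_of_diff, hp_not_vertex⟩ := hpu
  obtain ⟨hpP, hpu_ne⟩ := hp_vertex_of_diff.1
  refine ⟨hp_vertex_of_diff.of_subset (sdiff_subset_sdiff_left sdiff_subset) ⟨⟨hpP, hpv_ne⟩, hpu_ne⟩,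
    fun hp_vertex => hpv ⟨hp_vertex, hp_not_vertex⟩⟩

theorem still_active (P : Finset Pt)
    (hgp : GenPos (↑P : Set Pt)) (u v p : Pt)
    (hu : IsHullVertex (↑P : Set Pt) u) (hv : IsHullVertex (↑P : Set Pt) v)
    (huv : u ≠ v)
    (hpu : ActiveFor (↑P : Set Pt) u p)
    (hpv : ¬ ActiveFor (↑P : Set Pt) v p) :
    ActiveFor ((↑P : Set Pt) \ {v}) u p :=
  still_active_general P u v p hv hpu hpv
end
end
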